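/- For every positive integer n, t_{ℤ,2n}([0,1])^2 = t_{ℤ,n}([0,1/4]). -/

import Mathlib

open Polynomial Filter

/-- The supremum norm of an integer polynomial on the interval `[a, b]`. -/
noncomputable def supNorm (p : Polynomial ℤ) (a b : ℝ) : ℝ :=
  sSup ((fun x => |Polynomial.aeval x p|) '' Set.Icc a b)

/-- `tZ n a b` is the infimum over nonzero integer polynomials `p` of degree at most `n`
of `(sup_{x ∈ [a,b]} |p(x)|)^(1/n)`. -/
noncomputable def tZ (n : ℕ) (a b : ℝ) : ℝ :=
  sInf {r : ℝ | ∃ p : Polynomial ℤ, p ≠ 0 ∧ p.natDegree ≤ n ∧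
    r = supNorm p a b ^ ((1 : ℝ) / n)}

/-!
The substitution `x ↦ x - x²` maps `[0, 1]` onto `[0, 1/4]`, so `q ↦ q(x - x²)` doubles degrees
and preserves sup norms; this gives `t_{2n}([0,1])² ≤ t_n([0,1/4])`.

Conversely, for `p` of degree `≤ 2n` the polynomials `(1 - x) p(x) + x p(1 - x)` and
`x p(x) + (1 - x) p(1 - x)` are invariant under `x ↦ 1 - x`, are pointwise convex combinations of
values of `p` on `[0, 1]`, and do not both vanish, since `(1 - 2x) p` is a combination of them.
An invariant polynomial of degree `≤ 2n + 1` is `q(x - x²)` with `deg q ≤ n`, and then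
`‖q‖_{[0,1/4]} ≤ ‖p‖_{[0,1]}`.
-/

namespace Polynomial

variable {R : Type*} [CommRing R]

lemma one_sub_X_comp_one_sub_X : ((1 : R[X]) - X).comp (1 - X) = X := by
  simp

lemma comp_one_sub_X_comp_one_sub_X (p : R[X]) : (p.comp (1 - X)).comp (1 - X) = p := by
  rw [comp_assoc, one_sub_X_comp_one_sub_X, comp_X]

lemma X_sub_X_sq_comp_one_sub_X : (X - X ^ 2 : R[X]).comp (1 - X) = X - X ^ 2 := by
  simp only [sub_comp, X_comp, pow_comp]
  ring

noncomputable def symmetrize (p : R[X]) : R[X] := (1 - X) * p + X * p.comp (1 - X)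

lemma symmetrize_comp_one_sub_X (p : R[X]) : (symmetrize p).comp (1 - X) = symmetrize p := by
  simp only [symmetrize, add_comp, mul_comp, one_sub_X_comp_one_sub_X, X_comp,
    comp_one_sub_X_comp_one_sub_X]
  ring

lemma natDegree_symmetrize_le (p : R[X]) : (symmetrize p).natDegree ≤ p.natDegree + 1 := by
  have h₁ : ((1 : R[X]) - X).natDegree ≤ 1 := by compute_degree
  have h₂ : (p.comp (1 - X)).natDegree ≤ p.natDegree :=
    natDegree_comp_le.trans (by simpa using Nat.mul_le_mul_left p.natDegree h₁)
  refine natDegree_add_le_of_degree_le (natDegree_mul_le.trans ?_) (natDegree_mul_le.trans ?_)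
  · omega
  · have := natDegree_X_le (R := R); omega

lemma one_sub_two_X_mul_eq (p : R[X]) :
    (1 - 2 * X) * p = (1 - X) * symmetrize p - X * symmetrize (p.comp (1 - X)) := by
  simp only [symmetrize, comp_one_sub_X_comp_one_sub_X]
  ring

variable [IsDomain R]

lemma natDegree_X_sub_X_sq : (X - X ^ 2 : R[X]).natDegree = 2 := by
  compute_degree!

lemma natDegree_comp_one_sub_X (p : R[X]) : (p.comp (1 - X)).natDegree = p.natDegree := by
  have : ((1 : R[X]) - X).natDegree = 1 := by compute_degree!
  rw [natDegree_comp, this, mul_one]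

lemma X_sub_X_sq_ne_zero : (X - X ^ 2 : R[X]) ≠ 0 :=
  ne_zero_of_natDegree_gt (n := 0) (by rw [natDegree_X_sub_X_sq]; norm_num)

lemma comp_X_sub_X_sq_ne_zero {q : R[X]} (hq : q ≠ 0) : q.comp (X - X ^ 2) ≠ 0 := by
  rw [Ne, comp_eq_zero_iff, not_or, not_and_or]
  refine ⟨hq, Or.inr fun h => ?_⟩
  simpa [natDegree_X_sub_X_sq] using congrArg natDegree h

lemma symmetrize_ne_zero_or {p : R[X]} (hp : p ≠ 0) :
    symmetrize p ≠ 0 ∨ symmetrize (p.comp (1 - X)) ≠ 0 := by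
  by_contra! h
  have h2X : (1 - 2 * X : R[X]) ≠ 0 := fun h => by
    simpa using congrArg (coeff · 0) h
  have := one_sub_two_X_mul_eq p
  rw [h.1, h.2, mul_zero, mul_zero, sub_zero] at this
  exact mul_ne_zero h2X hp this

lemma exists_eq_C_add_X_sub_X_sq_mul {f : R[X]} (hf : f.comp (1 - X) = f) :
    ∃ g : R[X], f = C (f.eval 0) + (X - X ^ 2) * g ∧ g.comp (1 - X) = g := by
  -- `f - f(0)` vanishes at `0`, and by symmetry also at `1`.
  obtain ⟨s, hs⟩ : X - C 0 ∣ f - C (f.eval 0) := dvd_iff_isRoot.mpr (by simp)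
  have hf1 : f.eval 1 = f.eval 0 := by
    simpa using congrArg (eval 0) hf
  obtain ⟨k, hk⟩ : X - C 1 ∣ s := dvd_iff_isRoot.mpr (by
    simpa [hf1] using (congrArg (eval 1) hs).symm)
  have hfg : f - C (f.eval 0) = (X - X ^ 2) * -k := by
    rw [hs, hk]; simp only [map_zero, map_one, sub_zero]; ring
  refine ⟨-k, eq_add_of_sub_eq' hfg, mul_left_cancel₀ X_sub_X_sq_ne_zero ?_⟩
  rw [← hfg, ← X_sub_X_sq_comp_one_sub_X, ← mul_comp, ← hfg, sub_comp, hf, C_comp]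

lemma exists_comp_X_sub_X_sq_eq {f : R[X]} (hf : f.comp (1 - X) = f) :
    ∃ r : R[X], r.comp (X - X ^ 2) = f ∧ 2 * r.natDegree ≤ f.natDegree := by
  induction hd : f.natDegree using Nat.strong_induction_on generalizing f with
  | _ d ih =>
  obtain ⟨g, hfg, hg⟩ := exists_eq_C_add_X_sub_X_sq_mul hf
  rcases eq_or_ne g 0 with rfl | hg0
  · exact ⟨C (f.eval 0), by simpa using hfg.symm, by simp⟩
  have hdeg : f.natDegree = g.natDegree + 2 := by
    rw [hfg, natDegree_C_add, natDegree_mul X_sub_X_sq_ne_zero hg0, natDegree_X_sub_X_sq, add_comm]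
  obtain ⟨r, hr, hrdeg⟩ := ih g.natDegree (by omega) hg rfl
  refine ⟨C (f.eval 0) + X * r, ?_, ?_⟩
  · rw [add_comp, C_comp, mul_comp, X_comp, hr, ← hfg]
  · have hXr := natDegree_mul_le (p := X) (q := r)
    have hX := natDegree_X_le (R := R)
    rw [natDegree_C_add]
    omega

end Polynomial

lemma supNorm_bddAbove (p : ℤ[X]) (a b : ℝ) :
    BddAbove ((fun x => |aeval x p|) '' Set.Icc a b) :=
  isCompact_Icc.bddAbove_image (Polynomial.continuous_aeval p).abs.continuousOn

lemma le_supNorm (p : ℤ[X]) {a b x : ℝ} (hx : x ∈ Set.Icc a b) : |aeval x p| ≤ supNorm p a b :=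
  le_csSup (supNorm_bddAbove p a b) ⟨x, hx, rfl⟩

lemma supNorm_nonneg (p : ℤ[X]) {a b : ℝ} (h : a ≤ b) : 0 ≤ supNorm p a b :=
  (abs_nonneg _).trans (le_supNorm p (Set.left_mem_Icc.mpr h))

lemma supNorm_le (p : ℤ[X]) {a b M : ℝ} (h : a ≤ b) (H : ∀ x ∈ Set.Icc a b, |aeval x p| ≤ M) :
    supNorm p a b ≤ M :=
  csSup_le ((Set.nonempty_Icc.mpr h).image _) (by rintro _ ⟨x, hx, rfl⟩; exact H x hx)

lemma supNorm_comp_of_image_eq {p q : ℤ[X]} {a b c d : ℝ}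
    (h : (fun x => aeval x q) '' Set.Icc a b = Set.Icc c d) :
    supNorm (p.comp q) a b = supNorm p c d := by
  simp only [_root_.supNorm, ← h, Set.image_image, aeval_comp]

lemma supNorm_comp_one_sub_X (p : ℤ[X]) (a b : ℝ) :
    supNorm (p.comp (1 - X)) a b = supNorm p (1 - b) (1 - a) :=
  supNorm_comp_of_image_eq (by simp)

lemma image_sub_sq_Icc_zero_one : (fun x : ℝ => x - x ^ 2) '' Set.Icc 0 1 = Set.Icc 0 (1 / 4) := by
  refine subset_antisymm ?_ ?_
  · rintro _ ⟨x, ⟨hx₀, hx₁⟩, rfl⟩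
    constructor <;> nlinarith [sq_nonneg (2 * x - 1)]
  · have hcont : ContinuousOn (fun x : ℝ => x - x ^ 2) (Set.Icc 0 (1 / 2)) := by fun_prop
    calc Set.Icc (0 : ℝ) (1 / 4) = Set.Icc (0 - 0 ^ 2) (1 / 2 - (1 / 2) ^ 2) := by norm_num
      _ ⊆ (fun x : ℝ => x - x ^ 2) '' Set.Icc 0 (1 / 2) := intermediate_value_Icc (by norm_num) hcont
      _ ⊆ _ := Set.image_mono (Set.Icc_subset_Icc_right (by norm_num))

lemma supNorm_comp_X_sub_X_sq (q : ℤ[X]) : supNorm (q.comp (X - X ^ 2)) 0 1 = supNorm q 0 (1 / 4) :=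
  supNorm_comp_of_image_eq (by simpa using image_sub_sq_Icc_zero_one)

lemma supNorm_symmetrize_le (p : ℤ[X]) : supNorm (symmetrize p) 0 1 ≤ supNorm p 0 1 := by
  refine supNorm_le _ zero_le_one fun x ⟨hx₀, hx₁⟩ => ?_
  have hx : |aeval x p| ≤ supNorm p 0 1 := le_supNorm p ⟨hx₀, hx₁⟩
  have hx' : |aeval (1 - x) p| ≤ supNorm p 0 1 := le_supNorm p ⟨by linarith, by linarith⟩
  simp only [symmetrize, map_add, map_mul, map_sub, map_one, aeval_X, aeval_comp]
  calc |(1 - x) * aeval x p + x * aeval (1 - x) p|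
      ≤ (1 - x) * |aeval x p| + x * |aeval (1 - x) p| := by
        refine (abs_add_le _ _).trans_eq ?_
        rw [abs_mul, abs_mul, abs_of_nonneg (by linarith), abs_of_nonneg hx₀]
    _ ≤ (1 - x) * supNorm p 0 1 + x * supNorm p 0 1 := by gcongr
    _ = supNorm p 0 1 := by ring

lemma exists_supNorm_quarter_le {n : ℕ} {p : ℤ[X]} (hp : p ≠ 0) (hdeg : p.natDegree ≤ 2 * n) :
    ∃ q : ℤ[X], q ≠ 0 ∧ q.natDegree ≤ n ∧ supNorm q 0 (1 / 4) ≤ supNorm p 0 1 := by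
  obtain ⟨p', hp', hsym⟩ : ∃ p', (p' = p ∨ p' = p.comp (1 - X)) ∧ symmetrize p' ≠ 0 := by
    rcases symmetrize_ne_zero_or hp with h | h
    exacts [⟨p, Or.inl rfl, h⟩, ⟨_, Or.inr rfl, h⟩]
  have hdeg' : p'.natDegree = p.natDegree := by
    rcases hp' with rfl | rfl
    exacts [rfl, natDegree_comp_one_sub_X p]
  have hnorm' : supNorm p' 0 1 = supNorm p 0 1 := by
    rcases hp' with rfl | rfl
    · rfl
    · rw [supNorm_comp_one_sub_X]; norm_num
  obtain ⟨q, hq, hqdeg⟩ := exists_comp_X_sub_X_sq_eq (symmetrize_comp_one_sub_X p')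
  refine ⟨q, ?_, ?_, ?_⟩
  · rintro rfl
    exact hsym (by rw [← hq, zero_comp])
  · have := natDegree_symmetrize_le p'
    omega
  · rw [← supNorm_comp_X_sub_X_sq, hq, ← hnorm']
    exact supNorm_symmetrize_le p'

lemma rpow_one_div_two_mul_sq {x : ℝ} (hx : 0 ≤ x) (n : ℕ) :
    (x ^ ((1 : ℝ) / (2 * n : ℕ))) ^ 2 = x ^ ((1 : ℝ) / n) := by
  rw [← Real.rpow_natCast, ← Real.rpow_mul hx]
  push_cast
  rw [div_mul_eq_mul_div, one_mul, div_mul_cancel_left₀ two_ne_zero, one_div]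

lemma tZ_two_mul_sq (n : ℕ) {a b : ℝ} (hab : a ≤ b) :
    tZ (2 * n) a b ^ 2 = sInf {r : ℝ | ∃ p : ℤ[X], p ≠ 0 ∧ p.natDegree ≤ 2 * n ∧
      r = supNorm p a b ^ ((1 : ℝ) / n)} := by
  set A := {r : ℝ | ∃ p : ℤ[X], p ≠ 0 ∧ p.natDegree ≤ 2 * n ∧
    r = supNorm p a b ^ ((1 : ℝ) / (2 * n : ℕ))}
  have hA : A ⊆ Set.Ici 0 := by
    rintro _ ⟨p, -, -, rfl⟩
    exact Real.rpow_nonneg (supNorm_nonneg p hab) _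
  have hsq : sInf A ^ 2 = sInf ((· ^ 2) '' A) :=
    MonotoneOn.map_csInf_of_continuousWithinAt (continuous_pow 2).continuousWithinAt
      (pow_left_monotoneOn.mono hA) ⟨_, 1, one_ne_zero, by simp, rfl⟩ ⟨0, fun _ h => hA h⟩
  rw [tZ, hsq]
  congr 1
  ext r
  constructor
  · rintro ⟨_, ⟨p, hp, hdeg, rfl⟩, rfl⟩
    exact ⟨p, hp, hdeg, rpow_one_div_two_mul_sq (supNorm_nonneg p hab) n⟩
  · rintro ⟨p, hp, hdeg, rfl⟩
    exact ⟨_, ⟨p, hp, hdeg, rfl⟩, rpow_one_div_two_mul_sq (supNorm_nonneg p hab) n⟩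

theorem stmt_7_general (n : ℕ) :
    tZ (2 * n) 0 1 ^ 2 = tZ n 0 (1 / 4) := by
  rw [tZ_two_mul_sq n zero_le_one]
  refine csInf_eq_csInf_of_forall_exists_le ?_ ?_
  · rintro _ ⟨p, hp, hdeg, rfl⟩
    obtain ⟨q, hq, hqdeg, hle⟩ := exists_supNorm_quarter_le hp hdeg
    exact ⟨_, ⟨q, hq, hqdeg, rfl⟩,
      Real.rpow_le_rpow (supNorm_nonneg q (by norm_num)) hle (by positivity)⟩
  · rintro _ ⟨q, hq, hqdeg, rfl⟩
    refine ⟨_, ⟨q.comp (X - X ^ 2), comp_X_sub_X_sq_ne_zero hq, ?_, rfl⟩,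
      by rw [supNorm_comp_X_sub_X_sq]⟩
    rw [natDegree_comp, natDegree_X_sub_X_sq]
    omega

theorem stmt_7 (n : ℕ) (hn : 0 < n) :
    tZ (2 * n) 0 1 ^ 2 = tZ n 0 (1 / 4) :=
  stmt_7_general n
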